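/- Let (u_i)_{i∈ℕ} be a sequence dense in W_G for the graph norm, and for each m ∈ ℕ define the Galerkin gradient discretisation 𝒟_m = (X_{𝒟_m}, P_{𝒟_m}, G_{𝒟_m}) where X_{𝒟_m} = span(u_0, …, u_m), P_{𝒟_m} u = u, and G_{𝒟_m} u = Gu. Then the sequence (𝒟_m)_{m∈ℕ} is coercive, limit-conforming and consistent; if moreover the embedding of W_G (with the graph norm) into L is compact, then (𝒟_m)_{m∈ℕ} is also compact. -/

import Mathlib

open NormedSpace Filter Topology

noncomputable section

variable {L Lv : Type*} [NormedAddCommGroup L] [NormedSpace ℝ L]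
  [NormedAddCommGroup Lv] [NormedSpace ℝ Lv]

/-- The seminorm `|u|_{L,V} = sup_{μ ∈ V \ {0}} |⟨μ,u⟩| / ‖μ‖` (equal to `0` when `V = {0}`,
since `sSup ∅ = 0` in `ℝ`). -/
noncomputable def semV (V : Submodule ℝ (StrongDual ℝ L)) (u : L) : ℝ :=
  sSup ((fun μ : StrongDual ℝ L => |μ u| / ‖μ‖) '' {μ : StrongDual ℝ L | μ ∈ V ∧ μ ≠ 0})

/-- `IsWDpair W_G G φ w` says that `φ ∈ 𝐖_D` with `D φ = w`, i.e. the abstract Stokes formula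
`⟨φ, G u⟩ + ⟨w, u⟩ = 0` holds for all `u ∈ W_G`. -/
def IsWDpair (WG : Submodule ℝ L) (G : ↥WG →ₗ[ℝ] Lv) (φ : StrongDual ℝ Lv) (w : StrongDual ℝ L) : Prop :=
  ∀ u : ↥WG, φ (G u) + w (u : L) = 0

/-- A gradient discretisation `𝒟 = (X_𝒟, P_𝒟, G_𝒟)`: a finite-dimensional real vector space
`X`, a function reconstruction `P : X → L` and a gradient reconstruction `Gd : X → Lv`, such
that `v ↦ (|P v|_{L,V}^p + ‖Gd v‖^p)^{1/p}` is a norm on `X` (definiteness is the only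
non-automatic condition). -/
structure GradDisc (L Lv : Type*) [NormedAddCommGroup L] [NormedSpace ℝ L]
    [NormedAddCommGroup Lv] [NormedSpace ℝ Lv]
    (V : Submodule ℝ (StrongDual ℝ L)) (p : ℝ) where
  X : Type
  [instAddCommGroup : AddCommGroup X]
  [instModule : Module ℝ X]
  [instFin : FiniteDimensional ℝ X]
  P : X →ₗ[ℝ] L
  Gd : X →ₗ[ℝ] Lv
  dnorm_definite : ∀ v : X, (semV V (P v) ^ p + ‖Gd v‖ ^ p) ^ (1 / p) = 0 → v = 0

attribute [instance] GradDisc.instAddCommGroup GradDisc.instModule GradDisc.instFin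

namespace GradDisc

variable {V : Submodule ℝ (StrongDual ℝ L)} {p : ℝ}

/-- The discrete norm `‖v‖_𝒟 = (|P_𝒟 v|_{L,V}^p + ‖G_𝒟 v‖_Lv^p)^{1/p}`. -/
noncomputable def dnorm (D : GradDisc L Lv V p) (v : D.X) : ℝ :=
  (semV V (D.P v) ^ p + ‖D.Gd v‖ ^ p) ^ (1 / p)

/-- `C_𝒟 = max_{v ≠ 0} ‖P_𝒟 v‖_L / ‖v‖_𝒟`. -/
noncomputable def CD (D : GradDisc L Lv V p) : ℝ :=
  sSup ((fun v : D.X => ‖D.P v‖ / D.dnorm v) '' {v : D.X | v ≠ 0})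

/-- `W_𝒟(φ) = sup_{u ≠ 0} |⟨φ, G_𝒟 u⟩ + ⟨D φ, P_𝒟 u⟩| / ‖u‖_𝒟`, where `w = D φ`. -/
noncomputable def WDdef (D : GradDisc L Lv V p) (φ : StrongDual ℝ Lv) (w : StrongDual ℝ L) : ℝ :=
  sSup ((fun u : D.X => |φ (D.Gd u) + w (D.P u)| / D.dnorm u) '' {u : D.X | u ≠ 0})

/-- `S_𝒟(φ) = min_v (‖P_𝒟 v − φ‖_L + ‖G_𝒟 v − G φ‖_Lv)`, where `gφ = G φ`. -/
noncomputable def SDdef (D : GradDisc L Lv V p) (φ : L) (gφ : Lv) : ℝ :=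
  sInf (Set.range fun v : D.X => ‖D.P v - φ‖ + ‖D.Gd v - gφ‖)

end GradDisc

/-- Coercivity of a sequence of gradient discretisations: `sup_m C_{𝒟_m} < ∞`. -/
def Coercive {V : Submodule ℝ (StrongDual ℝ L)} {p : ℝ} (D : ℕ → GradDisc L Lv V p) : Prop :=
  ∃ C : ℝ, ∀ m : ℕ, (D m).CD ≤ C

/-- Limit-conformity: `W_{𝒟_m}(φ) → 0` for every `φ ∈ 𝐖_D` (with `w = D φ`). -/
def LimitConforming (WG : Submodule ℝ L) (G : ↥WG →ₗ[ℝ] Lv)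
    {V : Submodule ℝ (StrongDual ℝ L)} {p : ℝ} (D : ℕ → GradDisc L Lv V p) : Prop :=
  ∀ (φ : StrongDual ℝ Lv) (w : StrongDual ℝ L), IsWDpair WG G φ w →
    Filter.Tendsto (fun m => (D m).WDdef φ w) Filter.atTop (𝓝 0)

/-- Consistency: `S_{𝒟_m}(φ) → 0` for every `φ ∈ W_G`. -/
def Consistent (WG : Submodule ℝ L) (G : ↥WG →ₗ[ℝ] Lv)
    {V : Submodule ℝ (StrongDual ℝ L)} {p : ℝ} (D : ℕ → GradDisc L Lv V p) : Prop :=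
  ∀ u : ↥WG, Filter.Tendsto (fun m => (D m).SDdef (u : L) (G u)) Filter.atTop (𝓝 0)

/-- Compactness: bounded discrete sequences have relatively compact reconstructions in `L`. -/
def CompactSeq {V : Submodule ℝ (StrongDual ℝ L)} {p : ℝ} (D : ℕ → GradDisc L Lv V p) : Prop :=
  ∀ u : (m : ℕ) → (D m).X, (∃ C : ℝ, ∀ m : ℕ, (D m).dnorm (u m) ≤ C) →
    IsCompact (closure (Set.range fun m => (D m).P (u m)))


/-!
A Galerkin discretisation is a restriction of `W_G` itself: `P_𝒟` and `G_𝒟` are the inclusion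
and `G` on `span(u_0, …, u_m)`, so `‖·‖_𝒟` is the norm `‖·‖_{W_G}`. Hence `C_𝒟 ≤ C_{W_G,V}`, the
Stokes formula makes every `W_𝒟(φ)` vanish, consistency follows from the density of `(u_i)` and
the nestedness of the spaces, and a sequence bounded in `‖·‖_𝒟` is bounded in the graph norm, so
the compact embedding gives relative compactness.
-/

lemma le_rpow_add_rpow_one_div {p a b : ℝ} (hp : 0 < p) (ha : 0 ≤ a) (hb : 0 ≤ b) :
    a ≤ (a ^ p + b ^ p) ^ (1 / p) :=
  calc a = (a ^ p) ^ (1 / p) := by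
        rw [← Real.rpow_mul ha, mul_one_div_cancel hp.ne', Real.rpow_one]
    _ ≤ (a ^ p + b ^ p) ^ (1 / p) := by gcongr; exact le_add_of_nonneg_right (by positivity)

lemma add_le_two_mul_rpow_add_rpow_one_div {p a b : ℝ} (hp : 0 < p) (ha : 0 ≤ a) (hb : 0 ≤ b) :
    a + b ≤ 2 * (a ^ p + b ^ p) ^ (1 / p) := by
  have hb' := le_rpow_add_rpow_one_div hp hb ha
  rw [add_comm (b ^ p)] at hb'
  linarith [le_rpow_add_rpow_one_div hp ha hb]

theorem isCompact_closure_of_forall_exists_subseq_tendsto {X : Type*} [PseudoMetricSpace X]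
    {s : Set X} (h : ∀ x : ℕ → X, (∀ n, x n ∈ s) →
      ∃ φ : ℕ → ℕ, StrictMono φ ∧ ∃ l, Tendsto (x ∘ φ) atTop (𝓝 l)) :
    IsCompact (closure s) := by
  refine IsSeqCompact.isCompact fun y hy => ?_
  have happrox : ∀ n : ℕ, ∃ x ∈ s, dist (y n) x < 1 / ((n : ℝ) + 1) := fun n =>
    Metric.mem_closure_iff.1 (hy n) _ Nat.one_div_pos_of_nat
  choose x hxs hxy using happrox
  obtain ⟨φ, hφ, l, hl⟩ := h x hxs
  have hdist : Tendsto (fun k => dist ((x ∘ φ) k) (y (φ k))) atTop (𝓝 0) :=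
    squeeze_zero (fun _ => dist_nonneg) (fun k => (dist_comm _ _).trans_le (hxy (φ k)).le)
      (tendsto_one_div_add_atTop_nhds_zero_nat.comp hφ.tendsto_atTop)
  exact ⟨l, isClosed_closure.mem_of_tendsto hl (.of_forall fun k => subset_closure (hxs _)),
    φ, hφ, hl.congr_dist hdist⟩

lemma semV_nonneg (V : Submodule ℝ (StrongDual ℝ L)) (u : L) : 0 ≤ semV V u :=
  Real.sSup_nonneg (by rintro _ ⟨μ, _, rfl⟩; positivity)

namespace GradDisc

variable {V : Submodule ℝ (StrongDual ℝ L)} {p : ℝ} (D : GradDisc L Lv V p)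

lemma dnorm_nonneg (v : D.X) : 0 ≤ D.dnorm v := by
  have := semV_nonneg V (D.P v)
  unfold dnorm
  positivity

lemma dnorm_pos {v : D.X} (hv : v ≠ 0) : 0 < D.dnorm v :=
  (D.dnorm_nonneg v).lt_of_ne' fun h => hv (D.dnorm_definite v h)

lemma CD_le {C : ℝ} (hC : 0 ≤ C) (h : ∀ v, ‖D.P v‖ ≤ C * D.dnorm v) : D.CD ≤ C :=
  Real.sSup_le (by rintro _ ⟨v, hv, rfl⟩; exact (div_le_iff₀ (D.dnorm_pos hv)).2 (h v)) hC

lemma WDdef_eq_zero {φ : StrongDual ℝ Lv} {w : StrongDual ℝ L}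
    (h : ∀ u, φ (D.Gd u) + w (D.P u) = 0) : D.WDdef φ w = 0 := by
  have hzero : ∀ x ∈ (fun u => |φ (D.Gd u) + w (D.P u)| / D.dnorm u) '' {u | u ≠ 0}, x = 0 := by
    rintro _ ⟨u, -, rfl⟩
    simp [h u]
  exact le_antisymm (Real.sSup_nonpos fun x hx => (hzero x hx).le)
    (Real.sSup_nonneg fun x hx => (hzero x hx).ge)

lemma SDdef_nonneg (φ : L) (g : Lv) : 0 ≤ D.SDdef φ g :=
  Real.sInf_nonneg (by rintro _ ⟨v, rfl⟩; positivity)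

lemma SDdef_le (φ : L) (g : Lv) (v : D.X) : D.SDdef φ g ≤ ‖D.P v - φ‖ + ‖D.Gd v - g‖ :=
  csInf_le ⟨0, by rintro _ ⟨v, rfl⟩; positivity⟩ ⟨v, rfl⟩

end GradDisc

lemma consistent_of_forall_exists_approx {WG : Submodule ℝ L} {G : ↥WG →ₗ[ℝ] Lv}
    {V : Submodule ℝ (StrongDual ℝ L)} {p : ℝ} {D : ℕ → GradDisc L Lv V p}
    (h : ∀ (u : ↥WG) (ε : ℝ), 0 < ε → ∃ M, ∀ m ≥ M,
      ∃ v : (D m).X, ‖(D m).P v - u‖ + ‖(D m).Gd v - G u‖ < ε) :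
    Consistent WG G D := by
  intro u
  rw [Metric.tendsto_atTop]
  intro ε hε
  obtain ⟨M, hM⟩ := h u ε hε
  refine ⟨M, fun m hm => ?_⟩
  obtain ⟨v, hv⟩ := hM m hm
  rw [Real.dist_0_eq_abs, abs_of_nonneg ((D m).SDdef_nonneg _ _)]
  exact ((D m).SDdef_le _ _ v).trans_lt hv

theorem galerkin_gradsDisc_properties_general
    (WG : Submodule ℝ L)
    (G : ↥WG →ₗ[ℝ] Lv)
    (p : ℝ) (hp : 1 < p)
    (V : Submodule ℝ (StrongDual ℝ L))
    (CWGV : ℝ) (hCWGV : 0 < CWGV)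
    (hequiv : ∀ u : ↥WG, (‖(u : L)‖ ^ p + ‖G u‖ ^ p) ^ (1 / p) ≤
      CWGV * (semV V (u : L) ^ p + ‖G u‖ ^ p) ^ (1 / p))
    (useq : ℕ → ↥WG)
    (hdenseWG : ∀ v : ↥WG, ∀ ε : ℝ, 0 < ε → ∃ i : ℕ,
      (‖(v : L) - (useq i : L)‖ ^ p + ‖G v - G (useq i)‖ ^ p) ^ (1 / p) < ε)
    (D : ℕ → GradDisc L Lv V p)
    (j : ∀ m : ℕ, (D m).X →ₗ[ℝ] ↥WG)
    (hjP : ∀ (m : ℕ) (v : (D m).X), (D m).P v = ((j m v : ↥WG) : L))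
    (hjG : ∀ (m : ℕ) (v : (D m).X), (D m).Gd v = G (j m v))
    (hjrange : ∀ m : ℕ, LinearMap.range (j m) = Submodule.span ℝ (useq '' {i : ℕ | i ≤ m})) :
    Coercive D ∧ LimitConforming WG G D ∧ Consistent WG G D ∧
      ((∀ w : ℕ → ↥WG,
          (∃ C : ℝ, ∀ n : ℕ, (‖(w n : L)‖ ^ p + ‖G (w n)‖ ^ p) ^ (1 / p) ≤ C) →
          ∃ φ : ℕ → ℕ, StrictMono φ ∧ ∃ l : L,
            Tendsto (fun k => ((w (φ k) : L))) atTop (𝓝 l)) →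
        CompactSeq D) := by
  have hp0 : 0 < p := one_pos.trans hp
  have hgraph : ∀ m (v : (D m).X),
      (‖(j m v : L)‖ ^ p + ‖G (j m v)‖ ^ p) ^ (1 / p) ≤ CWGV * (D m).dnorm v := fun m v => by
    simpa only [GradDisc.dnorm, hjP, hjG] using hequiv (j m v)
  refine ⟨⟨CWGV, fun m => (D m).CD_le hCWGV.le fun v => ?_⟩, fun φ w hφw => ?_, ?_, ?_⟩
  · rw [hjP]
    exact (le_rpow_add_rpow_one_div hp0 (norm_nonneg _) (norm_nonneg _)).trans (hgraph m v)
  · have hzero : ∀ m, (D m).WDdef φ w = 0 := fun m =>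
      (D m).WDdef_eq_zero fun v => by rw [hjP, hjG]; exact hφw _
    simpa only [hzero] using tendsto_const_nhds
  · refine consistent_of_forall_exists_approx fun u ε hε => ?_
    obtain ⟨i, hi⟩ := hdenseWG u (ε / 2) (half_pos hε)
    refine ⟨i, fun m hm => ?_⟩
    obtain ⟨v, hv⟩ : useq i ∈ LinearMap.range (j m) :=
      hjrange m ▸ Submodule.subset_span ⟨i, hm, rfl⟩
    refine ⟨v, ?_⟩
    rw [hjP, hjG, hv, norm_sub_rev, norm_sub_rev (G _)]
    linarith [add_le_two_mul_rpow_add_rpow_one_div hp0 (norm_nonneg ((u : L) - useq i))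
      (norm_nonneg (G u - G (useq i)))]
  · rintro hcomp u ⟨C, hC⟩
    refine isCompact_closure_of_forall_exists_subseq_tendsto fun x hx => ?_
    choose f hf using hx
    obtain ⟨φ, hφ, l, hl⟩ := hcomp (fun n => j (f n) (u (f n)))
      ⟨CWGV * C, fun n => (hgraph _ _).trans (by gcongr; exact hC _)⟩
    refine ⟨φ, hφ, l, ?_⟩
    simpa only [Function.comp_def, ← hf, hjP] using hl

theorem galerkin_gradsDisc_properties
    [CompleteSpace L] [CompleteSpace Lv]
    [TopologicalSpace.SeparableSpace L] [TopologicalSpace.SeparableSpace Lv]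
    (hreflL : Function.Surjective ⇑(inclusionInDoubleDual ℝ L))
    (hreflLv : Function.Surjective ⇑(inclusionInDoubleDual ℝ Lv))
    (WG : Submodule ℝ L) (hWGdense : Dense (WG : Set L))
    (G : ↥WG →ₗ[ℝ] Lv)
    (hGclosed : IsClosed (Set.range fun u : ↥WG => ((u : L), G u)))
    (p : ℝ) (hp : 1 < p)
    (V : Submodule ℝ (StrongDual ℝ L)) (hVclosed : IsClosed (V : Set (StrongDual ℝ L)))
    (CWGV : ℝ) (hCWGV : 0 < CWGV)
    (hequiv : ∀ u : ↥WG, (‖(u : L)‖ ^ p + ‖G u‖ ^ p) ^ (1 / p) ≤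
      CWGV * (semV V (u : L) ^ p + ‖G u‖ ^ p) ^ (1 / p))
    (useq : ℕ → ↥WG)
    (hdenseWG : ∀ v : ↥WG, ∀ ε : ℝ, 0 < ε → ∃ i : ℕ,
      (‖(v : L) - (useq i : L)‖ ^ p + ‖G v - G (useq i)‖ ^ p) ^ (1 / p) < ε)
    (D : ℕ → GradDisc L Lv V p)
    (j : ∀ m : ℕ, (D m).X →ₗ[ℝ] ↥WG)
    (hjinj : ∀ m : ℕ, Function.Injective (j m))
    (hjP : ∀ (m : ℕ) (v : (D m).X), (D m).P v = ((j m v : ↥WG) : L))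
    (hjG : ∀ (m : ℕ) (v : (D m).X), (D m).Gd v = G (j m v))
    (hjrange : ∀ m : ℕ, LinearMap.range (j m) = Submodule.span ℝ (useq '' {i : ℕ | i ≤ m})) :
    Coercive D ∧ LimitConforming WG G D ∧ Consistent WG G D ∧
      ((∀ w : ℕ → ↥WG,
          (∃ C : ℝ, ∀ n : ℕ, (‖(w n : L)‖ ^ p + ‖G (w n)‖ ^ p) ^ (1 / p) ≤ C) →
          ∃ φ : ℕ → ℕ, StrictMono φ ∧ ∃ l : L,
            Tendsto (fun k => ((w (φ k) : L))) atTop (𝓝 l)) →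
        CompactSeq D) :=
  galerkin_gradsDisc_properties_general WG G p hp V CWGV hCWGV hequiv useq hdenseWG D j hjP hjG
    hjrange
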